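/- arXiv:2207.14691 — 3 statements merged into one kernel-verified Lean document; each statement's English description precedes it below -/
import Mathlib

section
/- Let Γ be a group, H a real Hilbert space, f : Γ → H a map, and M ≥ 0 a constant such that ‖f(sx) − f(sy)‖² ≤ ‖f(x) − f(y)‖² + M for all s, x, y ∈ Γ. Then for any finitely supported function v : Γ → ℝ with ∑_x v(x) = 0 and any s ∈ Γ, the quantity Q(π(s)v) − Q(v) is bounded above by (M/2)·(∑_x |v(x)|)², where Q(w) = −(1/2)∑_{x,y} w(x)w(y)‖f(x) − f(y)‖² and π(s)v(x) = v(s⁻¹x). -/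
theorem stmt_0 {Γ H : Type*} [Group Γ] [NormedAddCommGroup H] [InnerProductSpace ℝ H]
    (f : Γ → H) (M : ℝ) (hM : 0 ≤ M)
    (hf : ∀ s x y : Γ, ‖f (s * x) - f (s * y)‖ ^ 2 ≤ ‖f x - f y‖ ^ 2 + M)
    (v : Γ →₀ ℝ) (hv : v.sum (fun _ r => r) = 0) (s : Γ) :
    (-(1 / 2) * ∑ x ∈ (Finsupp.mapDomain (s * ·) v).support,
        ∑ y ∈ (Finsupp.mapDomain (s * ·) v).support,
          (Finsupp.mapDomain (s * ·) v) x * (Finsupp.mapDomain (s * ·) v) y * ‖f x - f y‖ ^ 2)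
      - (-(1 / 2) * ∑ x ∈ v.support, ∑ y ∈ v.support, v x * v y * ‖f x - f y‖ ^ 2)
      ≤ M / 2 * (∑ x ∈ v.support, |v x|) ^ 2 := by
  classical
  have hinj : Function.Injective (s * ·) := mul_right_injective s
  have hsupp : (Finsupp.mapDomain (s * ·) v).support
      = v.support.map ⟨(s * ·), hinj⟩ := by
    rw [Finsupp.mapDomain_support_of_injective hinj v, Finset.map_eq_image]
    rfl
  have happ : ∀ x, (Finsupp.mapDomain (s * ·) v) (s * x) = v x := fun x =>
    Finsupp.mapDomain_apply hinj v x
  have hd : ∀ x y : Γ, |‖f (s * x) - f (s * y)‖ ^ 2 - ‖f x - f y‖ ^ 2| ≤ M := by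
    intro x y
    rw [abs_le]
    constructor
    · have h := hf s⁻¹ (s * x) (s * y)
      simp only [inv_mul_cancel_left] at h
      linarith
    · linarith [hf s x y]
  simp only [hsupp, Finset.sum_map, Function.Embedding.coeFn_mk, happ]
  rw [sq, Finset.sum_mul_sum, Finset.mul_sum, Finset.mul_sum, Finset.mul_sum,
    ← Finset.sum_sub_distrib]
  refine Finset.sum_le_sum fun x _ => ?_
  rw [Finset.mul_sum, Finset.mul_sum, Finset.mul_sum, ← Finset.sum_sub_distrib]
  refine Finset.sum_le_sum fun y _ => ?_
  have h := hd x y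
  have h1 : |v x * v y * (‖f (s * x) - f (s * y)‖ ^ 2 - ‖f x - f y‖ ^ 2)|
      ≤ |v x| * |v y| * M := by
    rw [abs_mul, abs_mul]
    exact mul_le_mul_of_nonneg_left h (by positivity)
  have h2 := neg_abs_le (v x * v y * (‖f (s * x) - f (s * y)‖ ^ 2 - ‖f x - f y‖ ^ 2))
  nlinarith [h1, h2]
end

section
/- Let Γ be a group, H a real Hilbert space, f : Γ → H, and M ≥ 0 with ‖f(sx) − f(sy)‖² ≤ ‖f(x) − f(y)‖² + M for all s,x,y ∈ Γ. Define for each finitely supported mean-zero v : Γ → ℝ the seminorm ‖v‖_f = (−(1/2)∑_{x,y} v(x)v(y)‖f(x)−f(y)‖²)^{1/2} and the norm ‖v‖_E = ‖v‖_f + ‖v‖₁. Then for every s ∈ Γ and every such v, ‖π(s)v‖_E ≤ (√(M/2) + 1)·‖v‖_E, where (π(s)v)(x) = v(s⁻¹x). -/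
private lemma sqrt_add_le' (a b : ℝ) : Real.sqrt (a + b) ≤ Real.sqrt a + Real.sqrt b := by
  rcases le_or_gt a 0 with ha | ha
  · calc Real.sqrt (a + b) ≤ Real.sqrt b := Real.sqrt_le_sqrt (by linarith)
      _ ≤ Real.sqrt a + Real.sqrt b := le_add_of_nonneg_left (Real.sqrt_nonneg a)
  rcases le_or_gt b 0 with hb | hb
  · calc Real.sqrt (a + b) ≤ Real.sqrt a := Real.sqrt_le_sqrt (by linarith)
      _ ≤ Real.sqrt a + Real.sqrt b := le_add_of_nonneg_right (Real.sqrt_nonneg b)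
  have h1 : Real.sqrt a ^ 2 = a := Real.sq_sqrt ha.le
  have h2 : Real.sqrt b ^ 2 = b := Real.sq_sqrt hb.le
  have h3 : 0 ≤ Real.sqrt a := Real.sqrt_nonneg a
  have h4 : 0 ≤ Real.sqrt b := Real.sqrt_nonneg b
  rw [show a + b = Real.sqrt a ^ 2 + Real.sqrt b ^ 2 by rw [h1, h2]]
  calc Real.sqrt (Real.sqrt a ^ 2 + Real.sqrt b ^ 2)
      ≤ Real.sqrt ((Real.sqrt a + Real.sqrt b) ^ 2) := Real.sqrt_le_sqrt (by nlinarith)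
    _ = Real.sqrt a + Real.sqrt b := Real.sqrt_sq (by positivity)

theorem stmt_2 {Γ H : Type*} [Group Γ] [NormedAddCommGroup H] [InnerProductSpace ℝ H]
    (f : Γ → H) (M : ℝ) (hM : 0 ≤ M)
    (hf : ∀ s x y : Γ, ‖f (s * x) - f (s * y)‖ ^ 2 ≤ ‖f x - f y‖ ^ 2 + M)
    (v : Γ →₀ ℝ) (hv : v.sum (fun _ r => r) = 0) (s : Γ) :
    Real.sqrt (-(1 / 2) * ∑ x ∈ (Finsupp.mapDomain (s * ·) v).support,
        ∑ y ∈ (Finsupp.mapDomain (s * ·) v).support,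
          (Finsupp.mapDomain (s * ·) v) x * (Finsupp.mapDomain (s * ·) v) y * ‖f x - f y‖ ^ 2)
      + ∑ x ∈ (Finsupp.mapDomain (s * ·) v).support, |(Finsupp.mapDomain (s * ·) v) x|
      ≤ (Real.sqrt (M / 2) + 1) *
        (Real.sqrt (-(1 / 2) * ∑ x ∈ v.support, ∑ y ∈ v.support, v x * v y * ‖f x - f y‖ ^ 2)
          + ∑ x ∈ v.support, |v x|) := by
  classical
  have hinj : Function.Injective (s * ·) := mul_right_injective s
  set w := Finsupp.mapDomain (s * ·) v with hw
  have hsupp : w.support = v.support.image (s * ·) :=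
    Finsupp.mapDomain_support_of_injective hinj v
  have happ : ∀ x : Γ, w (s * x) = v x := fun x => Finsupp.mapDomain_apply hinj v x
  have hL : ∑ x ∈ w.support, |w x| = ∑ x ∈ v.support, |v x| := by
    rw [hsupp, Finset.sum_image (fun a _ b _ h => hinj h)]
    exact Finset.sum_congr rfl fun x _ => by rw [happ]
  have hQ : ∑ x ∈ w.support, ∑ y ∈ w.support, w x * w y * ‖f x - f y‖ ^ 2
      = ∑ x ∈ v.support, ∑ y ∈ v.support, v x * v y * ‖f (s * x) - f (s * y)‖ ^ 2 := by
    rw [hsupp, Finset.sum_image (fun a _ b _ h => hinj h)]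
    refine Finset.sum_congr rfl fun x _ => ?_
    rw [Finset.sum_image (fun a _ b _ h => hinj h)]
    exact Finset.sum_congr rfl fun y _ => by rw [happ, happ]
  set L := ∑ x ∈ v.support, |v x| with hLdef
  have hL0 : 0 ≤ L := Finset.sum_nonneg fun x _ => abs_nonneg _
  set Qv := -(1 / 2) * ∑ x ∈ v.support, ∑ y ∈ v.support, v x * v y * ‖f x - f y‖ ^ 2 with hQv
  -- key quadratic bound
  have hkey : -(1 / 2) * ∑ x ∈ w.support, ∑ y ∈ w.support, w x * w y * ‖f x - f y‖ ^ 2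
      ≤ Qv + M / 2 * L ^ 2 := by
    rw [hQ, hQv]
    have hbound : ∀ x y : Γ, v x * v y * ‖f x - f y‖ ^ 2
        - v x * v y * ‖f (s * x) - f (s * y)‖ ^ 2 ≤ |v x| * |v y| * M := by
      intro x y
      have h1 : ‖f (s * x) - f (s * y)‖ ^ 2 ≤ ‖f x - f y‖ ^ 2 + M := hf s x y
      have h2 : ‖f x - f y‖ ^ 2 ≤ ‖f (s * x) - f (s * y)‖ ^ 2 + M := by
        have := hf s⁻¹ (s * x) (s * y)
        simpa using this
      have habs : |‖f x - f y‖ ^ 2 - ‖f (s * x) - f (s * y)‖ ^ 2| ≤ M := by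
        rw [abs_le]; constructor <;> linarith
      calc v x * v y * ‖f x - f y‖ ^ 2 - v x * v y * ‖f (s * x) - f (s * y)‖ ^ 2
          = v x * v y * (‖f x - f y‖ ^ 2 - ‖f (s * x) - f (s * y)‖ ^ 2) := by ring
        _ ≤ |v x * v y * (‖f x - f y‖ ^ 2 - ‖f (s * x) - f (s * y)‖ ^ 2)| := le_abs_self _
        _ = |v x| * |v y| * |‖f x - f y‖ ^ 2 - ‖f (s * x) - f (s * y)‖ ^ 2| := by
            rw [abs_mul, abs_mul]
        _ ≤ |v x| * |v y| * M := by
            apply mul_le_mul_of_nonneg_left habs (by positivity)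
    have hsum : ∑ x ∈ v.support, ∑ y ∈ v.support,
        (v x * v y * ‖f x - f y‖ ^ 2 - v x * v y * ‖f (s * x) - f (s * y)‖ ^ 2)
        ≤ ∑ x ∈ v.support, ∑ y ∈ v.support, |v x| * |v y| * M :=
      Finset.sum_le_sum fun x _ => Finset.sum_le_sum fun y _ => hbound x y
    have hrhs : ∑ x ∈ v.support, ∑ y ∈ v.support, |v x| * |v y| * M = L ^ 2 * M := by
      have h : ∑ x ∈ v.support, ∑ y ∈ v.support, |v x| * |v y| * M
          = (∑ x ∈ v.support, |v x|) * (∑ y ∈ v.support, |v y|) * M := by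
        rw [Finset.sum_mul_sum, Finset.sum_mul]
        exact Finset.sum_congr rfl fun x _ => by rw [Finset.sum_mul]
      rw [h, hLdef]; ring
    have := hsum
    rw [hrhs] at this
    have hsub : ∑ x ∈ v.support, ∑ y ∈ v.support,
        (v x * v y * ‖f x - f y‖ ^ 2 - v x * v y * ‖f (s * x) - f (s * y)‖ ^ 2)
        = (∑ x ∈ v.support, ∑ y ∈ v.support, v x * v y * ‖f x - f y‖ ^ 2)
          - ∑ x ∈ v.support, ∑ y ∈ v.support, v x * v y * ‖f (s * x) - f (s * y)‖ ^ 2 := by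
      rw [← Finset.sum_sub_distrib]
      exact Finset.sum_congr rfl fun x _ => by rw [← Finset.sum_sub_distrib]
    rw [hsub] at this
    linarith
  have step1 : Real.sqrt (-(1 / 2) * ∑ x ∈ w.support, ∑ y ∈ w.support,
      w x * w y * ‖f x - f y‖ ^ 2) ≤ Real.sqrt Qv + Real.sqrt (M / 2) * L := by
    calc Real.sqrt (-(1 / 2) * ∑ x ∈ w.support, ∑ y ∈ w.support, w x * w y * ‖f x - f y‖ ^ 2)
        ≤ Real.sqrt (Qv + M / 2 * L ^ 2) := Real.sqrt_le_sqrt hkey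
      _ ≤ Real.sqrt Qv + Real.sqrt (M / 2 * L ^ 2) := sqrt_add_le' _ _
      _ = Real.sqrt Qv + Real.sqrt (M / 2) * L := by
          rw [show Real.sqrt (M / 2 * L ^ 2) = Real.sqrt (M / 2) * L from by
            rw [Real.sqrt_mul (div_nonneg hM (by norm_num)), Real.sqrt_sq hL0]]
  have hQv0 : 0 ≤ Real.sqrt Qv := Real.sqrt_nonneg _
  have hsM : 0 ≤ Real.sqrt (M / 2) := Real.sqrt_nonneg _
  rw [hL]
  nlinarith [step1, mul_nonneg hsM hQv0]
end

section
/- Let Γ be a group, W a Γ-set, and q : Γ × Γ → (finitely supported ℝ-valued functions on W) a Γ-equivariant map with bounded area constant M (‖q[x,y] + q[y,z] + q[z,x]‖₁ ≤ M for all x,y,z ∈ Γ) and antisymmetric (q[y,x] = −q[x,y]). Suppose J : ℓ¹(W) → H is a map into a Hilbert space with ‖J(v) − J(w)‖² = ‖v − w‖₁. Then f(x) := J(q[e,x]) satisfies ‖f(sx) − f(sy)‖² ≤ ‖f(x) − f(y)‖² + 2M for all s,x,y ∈ Γ. -/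
/-- The ℓ¹ norm of a finitely supported real-valued function. -/
def l1Norm' {W : Type*} (w : W →₀ ℝ) : ℝ := ∑ a ∈ w.support, |w a|

lemma l1Norm'_eq {W : Type*} (w : W →₀ ℝ) (s : Finset W) (h : w.support ⊆ s) :
    l1Norm' w = ∑ a ∈ s, |w a| := by
  rw [l1Norm']
  exact Finset.sum_subset h (fun a _ ha => by
    simp [Finsupp.notMem_support_iff.mp ha])

lemma l1Norm'_add {W : Type*} (u v : W →₀ ℝ) :
    l1Norm' (u + v) ≤ l1Norm' u + l1Norm' v := by
  classical
  rw [l1Norm'_eq (u + v) (u.support ∪ v.support) Finsupp.support_add,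
      l1Norm'_eq u (u.support ∪ v.support) Finset.subset_union_left,
      l1Norm'_eq v (u.support ∪ v.support) Finset.subset_union_right,
      ← Finset.sum_add_distrib]
  exact Finset.sum_le_sum fun a _ => by simpa using abs_add_le (u a) (v a)

theorem stmt_12 {Γ W H : Type*} [Group Γ] [MulAction Γ W]
    [NormedAddCommGroup H] [InnerProductSpace ℝ H]
    (q : Γ → Γ → (W →₀ ℝ)) (M : ℝ) (hM : 0 ≤ M)
    (hequiv : ∀ s x y : Γ, q (s * x) (s * y) = Finsupp.mapDomain (fun w => s • w) (q x y))
    (hinv : ∀ (s : Γ) (w : W →₀ ℝ), l1Norm' (Finsupp.mapDomain (fun a => s • a) w) = l1Norm' w)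
    (hanti : ∀ x y : Γ, q y x = -q x y)
    (harea : ∀ x y z : Γ, l1Norm' (q x y + q y z + q z x) ≤ M)
    (J : (W →₀ ℝ) → H) (hJ : ∀ v w : W →₀ ℝ, ‖J v - J w‖ ^ 2 = l1Norm' (v - w)) :
    ∀ s x y : Γ,
      ‖J (q 1 (s * x)) - J (q 1 (s * y))‖ ^ 2 ≤ ‖J (q 1 x) - J (q 1 y)‖ ^ 2 + 2 * M := by
  intro s x y
  rw [hJ, hJ]
  have hx : q s (s * x) = Finsupp.mapDomain (fun w => s • w) (q 1 x) := by
    have := hequiv s 1 x; rwa [mul_one] at this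
  have hy : q s (s * y) = Finsupp.mapDomain (fun w => s • w) (q 1 y) := by
    have := hequiv s 1 y; rwa [mul_one] at this
  have hC : q s (s * x) + q (s * y) s
      = Finsupp.mapDomain (fun w => s • w) (q 1 x - q 1 y) := by
    have hneg : Finsupp.mapDomain (fun w => s • w) (-q 1 y)
        = -Finsupp.mapDomain (fun w => s • w) (q 1 y) :=
      map_neg (Finsupp.mapDomain.addMonoidHom (fun w => s • w)) (q 1 y)
    rw [hanti s (s * y), hx, hy, sub_eq_add_neg, Finsupp.mapDomain_add, hneg]
  have key : q 1 (s * x) - q 1 (s * y) =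
      (q 1 (s * x) + q (s * x) (s * y) + q (s * y) 1) +
      ((q (s * y) (s * x) + q (s * x) s + q s (s * y)) +
       (q s (s * x) + q (s * y) s)) := by
    rw [hanti (s * x) (s * y), hanti s (s * x), hanti s (s * y), hanti 1 (s * y)]
    abel
  have h1 := harea 1 (s * x) (s * y)
  have h2 := harea (s * y) (s * x) s
  have hCn : l1Norm' (q s (s * x) + q (s * y) s) = l1Norm' (q 1 x - q 1 y) := by
    rw [hC, hinv]
  calc l1Norm' (q 1 (s * x) - q 1 (s * y))
      ≤ l1Norm' (q 1 (s * x) + q (s * x) (s * y) + q (s * y) 1) +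
        (l1Norm' (q (s * y) (s * x) + q (s * x) s + q s (s * y)) +
         l1Norm' (q s (s * x) + q (s * y) s)) := by
        rw [key]
        exact (l1Norm'_add _ _).trans (by gcongr; exact l1Norm'_add _ _)
    _ ≤ l1Norm' (q 1 x - q 1 y) + 2 * M := by rw [hCn]; linarith
end
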